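/- arXiv:math/0611880 — 2 statements merged into one kernel-verified Lean document; each statement's English description precedes it below -/
import Mathlib

section
/- With θ = dz - 2∑_{i=1}^{2m}(y_i dx_i - x_i dy_i), f_2 = e_2 + ∑_{a=1}^m (y_{2a-1}^2 + x_{2a-1}^2 - y_{2a}^2 - x_{2a}^2) and f_3 = e_3 + 2∑_{a=1}^m (y_{2a-1} y_{2a} + x_{2a-1} x_{2a}), one has I_2(dz) = df_2 and I_3(dz) = df_3, where I_2, I_3 act on 1-forms dually to the hypercomplex structure. -/
/-- Points of `ℝ^{4m+4}` with coordinates `(x, y, z, e)`, where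
`x (a, 0) = x_{2a-1}`, `x (a, 1) = x_{2a}` and similarly for `y`. -/
abbrev Pt (m : ℕ) := (Fin m × Fin 2 → ℝ) × (Fin m × Fin 2 → ℝ) × ℝ × (Fin 3 → ℝ)

/-- The coordinate 1-form `dx_i`. -/
def dxL (m : ℕ) (i : Fin m × Fin 2) : Pt m →ₗ[ℝ] ℝ where
  toFun p := p.1 i
  map_add' _ _ := rfl
  map_smul' _ _ := rfl

/-- The coordinate 1-form `dy_i`. -/
def dyL (m : ℕ) (i : Fin m × Fin 2) : Pt m →ₗ[ℝ] ℝ where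
  toFun p := p.2.1 i
  map_add' _ _ := rfl
  map_smul' _ _ := rfl

/-- The coordinate 1-form `dz`. -/
def dzL (m : ℕ) : Pt m →ₗ[ℝ] ℝ where
  toFun p := p.2.2.1
  map_add' _ _ := rfl
  map_smul' _ _ := rfl

/-- The coordinate 1-form `de_k`. -/
def deL (m : ℕ) (k : Fin 3) : Pt m →ₗ[ℝ] ℝ where
  toFun p := p.2.2.2 k
  map_add' _ _ := rfl
  map_smul' _ _ := rfl

/-- The invariant 1-form `θ = dz - 2∑ᵢ (yᵢ dxᵢ - xᵢ dyᵢ)` at the point `p`. -/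
noncomputable def thetaL (m : ℕ) (p : Pt m) : Pt m →ₗ[ℝ] ℝ :=
  dzL m - (2 : ℝ) • ∑ i : Fin m × Fin 2, (p.2.1 i • dxL m i - p.1 i • dyL m i)

/-- `f₂ = e₂ + ∑ₐ (y_{2a-1}² + x_{2a-1}² - y_{2a}² - x_{2a}²)`. -/
def f2 (m : ℕ) (p : Pt m) : ℝ :=
  p.2.2.2 1 + ∑ a : Fin m,
    (p.2.1 (a, 0) ^ 2 + p.1 (a, 0) ^ 2 - p.2.1 (a, 1) ^ 2 - p.1 (a, 1) ^ 2)

/-- `f₃ = e₃ + 2 ∑ₐ (y_{2a-1} y_{2a} + x_{2a-1} x_{2a})`. -/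
def f3 (m : ℕ) (p : Pt m) : ℝ :=
  p.2.2.2 2 + 2 * ∑ a : Fin m,
    (p.2.1 (a, 0) * p.2.1 (a, 1) + p.1 (a, 0) * p.1 (a, 1))

/-! Since `dz = θ + 2 ∑ᵢ (yᵢ dxᵢ - xᵢ dyᵢ)` and `Iₖ θ = deₖ`, linearity gives
`Iₖ dz = deₖ + 2 ∑ᵢ (yᵢ Iₖ dxᵢ - xᵢ Iₖ dyᵢ)`. On each quaternionic block `Iₖ` permutes the
`dxᵢ, dyᵢ` up to sign, and the resulting 1-form is exactly the differential of the quadratic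
part of `fₖ`. -/

section

variable {m : ℕ}

@[simp] theorem dxL_apply (i : Fin m × Fin 2) (v : Pt m) : dxL m i v = v.1 i := rfl

@[simp] theorem dyL_apply (i : Fin m × Fin 2) (v : Pt m) : dyL m i v = v.2.1 i := rfl

@[simp] theorem deL_apply (k : Fin 3) (v : Pt m) : deL m k v = v.2.2.2 k := rfl

theorem dzL_eq_thetaL_add (p : Pt m) :
    dzL m = thetaL m p + (2 : ℝ) • ∑ i, (p.2.1 i • dxL m i - p.1 i • dyL m i) := by
  rw [thetaL]
  abel

theorem map_dzL_apply (J : (Pt m →ₗ[ℝ] ℝ) →ₗ[ℝ] (Pt m →ₗ[ℝ] ℝ)) (p v : Pt m) :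
    J (dzL m) v = J (thetaL m p) v + 2 * ∑ a : Fin m,
      (p.2.1 (a, 0) * J (dxL m (a, 0)) v + p.2.1 (a, 1) * J (dxL m (a, 1)) v
        - p.1 (a, 0) * J (dyL m (a, 0)) v - p.1 (a, 1) * J (dyL m (a, 1)) v) := by
  rw [dzL_eq_thetaL_add p]
  simp only [map_add, map_smul, map_sum, map_sub, LinearMap.add_apply, LinearMap.smul_apply,
    LinearMap.sub_apply, LinearMap.coe_sum, Finset.sum_apply, smul_eq_mul, Fintype.sum_prod_type,
    Fin.sum_univ_two, Finset.sum_add_distrib, Finset.sum_sub_distrib]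
  ring

theorem hasFDerivAt_x (p : Pt m) (i : Fin m × Fin 2) :
    HasFDerivAt (fun q : Pt m => q.1 i) (dxL m i).toContinuousLinearMap p :=
  (dxL m i).toContinuousLinearMap.hasFDerivAt

theorem hasFDerivAt_y (p : Pt m) (i : Fin m × Fin 2) :
    HasFDerivAt (fun q : Pt m => q.2.1 i) (dyL m i).toContinuousLinearMap p :=
  (dyL m i).toContinuousLinearMap.hasFDerivAt

theorem hasFDerivAt_e (p : Pt m) (k : Fin 3) :
    HasFDerivAt (fun q : Pt m => q.2.2.2 k) (deL m k).toContinuousLinearMap p :=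
  (deL m k).toContinuousLinearMap.hasFDerivAt

theorem fderiv_f2_apply (p v : Pt m) :
    fderiv ℝ (f2 m) p v = v.2.2.2 1 + 2 * ∑ a : Fin m,
      (p.2.1 (a, 0) * v.2.1 (a, 0) + p.1 (a, 0) * v.1 (a, 0)
        - p.2.1 (a, 1) * v.2.1 (a, 1) - p.1 (a, 1) * v.1 (a, 1)) := by
  have h : HasFDerivAt (f2 m) _ p := (hasFDerivAt_e p 1).fun_add <|
    HasFDerivAt.fun_sum (u := Finset.univ) fun a _ =>
      ((((hasFDerivAt_y p (a, 0)).pow 2).fun_add ((hasFDerivAt_x p (a, 0)).pow 2)).fun_sub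
        ((hasFDerivAt_y p (a, 1)).pow 2)).fun_sub ((hasFDerivAt_x p (a, 1)).pow 2)
  rw [h.fderiv]
  simp [Finset.mul_sum, mul_add, mul_sub, mul_assoc]

theorem fderiv_f3_apply (p v : Pt m) :
    fderiv ℝ (f3 m) p v = v.2.2.2 2 + 2 * ∑ a : Fin m,
      (p.2.1 (a, 0) * v.2.1 (a, 1) + p.2.1 (a, 1) * v.2.1 (a, 0)
        + p.1 (a, 0) * v.1 (a, 1) + p.1 (a, 1) * v.1 (a, 0)) := by
  have h : HasFDerivAt (f3 m) _ p := (hasFDerivAt_e p 2).fun_add <|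
    (HasFDerivAt.fun_sum (u := Finset.univ) fun a _ =>
      ((hasFDerivAt_y p (a, 0)).fun_mul (hasFDerivAt_y p (a, 1))).fun_add
        ((hasFDerivAt_x p (a, 0)).fun_mul (hasFDerivAt_x p (a, 1)))).const_mul (2 : ℝ)
  rw [h.fderiv]
  simp [add_assoc]

end

theorem I2_I3_dz_exact_general (m : ℕ) (p : Pt m)
    (J2 J3 : (Pt m →ₗ[ℝ] ℝ) →ₗ[ℝ] (Pt m →ₗ[ℝ] ℝ))
    -- I₂ on the coframe
    (h2x1 : ∀ a : Fin m, J2 (dxL m (a, 0)) = dyL m (a, 0))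
    (h2x2 : ∀ a : Fin m, J2 (dxL m (a, 1)) = -dyL m (a, 1))
    (h2y1 : ∀ a : Fin m, J2 (dyL m (a, 0)) = -dxL m (a, 0))
    (h2y2 : ∀ a : Fin m, J2 (dyL m (a, 1)) = dxL m (a, 1))
    (h2θ : J2 (thetaL m p) = deL m 1)
    -- I₃ on the coframe
    (h3x1 : ∀ a : Fin m, J3 (dxL m (a, 0)) = dyL m (a, 1))
    (h3x2 : ∀ a : Fin m, J3 (dxL m (a, 1)) = dyL m (a, 0))
    (h3y2 : ∀ a : Fin m, J3 (dyL m (a, 1)) = -dxL m (a, 0))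
    (h3y1 : ∀ a : Fin m, J3 (dyL m (a, 0)) = -dxL m (a, 1))
    (h3θ : J3 (thetaL m p) = deL m 2) :
    J2 (dzL m) = (fderiv ℝ (f2 m) p).toLinearMap ∧
    J3 (dzL m) = (fderiv ℝ (f3 m) p).toLinearMap := by
  refine ⟨LinearMap.ext fun v => ?_, LinearMap.ext fun v => ?_⟩
  · simp only [map_dzL_apply J2 p v, h2x1, h2x2, h2y1, h2y2, h2θ, ContinuousLinearMap.coe_coe,
      fderiv_f2_apply, LinearMap.neg_apply, dxL_apply, dyL_apply, deL_apply]
    exact congrArg _ (congrArg _ (Finset.sum_congr rfl fun a _ => by ring))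
  · simp only [map_dzL_apply J3 p v, h3x1, h3x2, h3y1, h3y2, h3θ, ContinuousLinearMap.coe_coe,
      fderiv_f3_apply, LinearMap.neg_apply, dxL_apply, dyL_apply, deL_apply]
    exact congrArg _ (congrArg _ (Finset.sum_congr rfl fun a _ => by ring))

/-- At every point `p`, if `J₂` and `J₃` are the actions of `I₂` resp. `I₃` on
1-forms (determined on the coframe `{dxᵢ, dyᵢ, θ, deₖ}` as in the context),
then `I₂(dz) = df₂` and `I₃(dz) = df₃`. -/
theorem I2_I3_dz_exact (m : ℕ) (p : Pt m)
    (J2 J3 : (Pt m →ₗ[ℝ] ℝ) →ₗ[ℝ] (Pt m →ₗ[ℝ] ℝ))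
    -- I₂ on the coframe
    (h2x1 : ∀ a : Fin m, J2 (dxL m (a, 0)) = dyL m (a, 0))
    (h2x2 : ∀ a : Fin m, J2 (dxL m (a, 1)) = -dyL m (a, 1))
    (h2y1 : ∀ a : Fin m, J2 (dyL m (a, 0)) = -dxL m (a, 0))
    (h2y2 : ∀ a : Fin m, J2 (dyL m (a, 1)) = dxL m (a, 1))
    (h2θ : J2 (thetaL m p) = deL m 1)
    (h2e2 : J2 (deL m 1) = -thetaL m p)
    (h2e1 : J2 (deL m 0) = -deL m 2)
    (h2e3 : J2 (deL m 2) = deL m 0)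
    -- I₃ on the coframe
    (h3x1 : ∀ a : Fin m, J3 (dxL m (a, 0)) = dyL m (a, 1))
    (h3x2 : ∀ a : Fin m, J3 (dxL m (a, 1)) = dyL m (a, 0))
    (h3y2 : ∀ a : Fin m, J3 (dyL m (a, 1)) = -dxL m (a, 0))
    (h3y1 : ∀ a : Fin m, J3 (dyL m (a, 0)) = -dxL m (a, 1))
    (h3θ : J3 (thetaL m p) = deL m 2)
    (h3e3 : J3 (deL m 2) = -thetaL m p)
    (h3e1 : J3 (deL m 0) = deL m 1)
    (h3e2 : J3 (deL m 1) = -deL m 0) :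
    J2 (dzL m) = (fderiv ℝ (f2 m) p).toLinearMap ∧
    J3 (dzL m) = (fderiv ℝ (f3 m) p).toLinearMap :=
  I2_I3_dz_exact_general m p J2 J3 h2x1 h2x2 h2y1 h2y2 h2θ h3x1 h3x2 h3y2 h3y1 h3θ
end

section
/- Suppose (a_n)_{n≥1} is a sequence of nonnegative reals satisfying a_{n+1} ≤ K ∑_{i=1}^n a_i a_{n+1-i} for all n ≥ 1, for some constant K > 0. Then the power series ∑ a_n t^n has positive radius of convergence; in fact a_n ≤ (k c^n)/n^2 where k = 1/(16K) and c is chosen so that a_1 ≤ k c, by induction using (1/(16k)) ∑_{i=1}^n (k c^i/i^2)(k c^{n+1-i}/(n+1-i)^2) ≤ k c^{n+1}/(n+1)^2. -/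
/-! Induction on `n`: feeding the bounds `a_i ≤ k cⁱ / i²` into the recursion leaves
`K k² cⁿ⁺¹ ∑_{i+j=n+1} 1/(i² j²)`, and since `1/(ij) = (1/i + 1/j)/(n+1)`, the convolution sum
is at most `2/(n+1)² · 2 ∑ 1/i² ≤ 8/(n+1)²`. So `8 K k ≤ 1` propagates the bound, and
`a_n ≤ k cⁿ` is dominated by a geometric series for `|t| < 1/c`. -/

open Finset

lemma sum_Icc_one_inv_sq_le_two (n : ℕ) : ∑ i ∈ Icc 1 n, ((i : ℝ) ^ 2)⁻¹ ≤ 2 := by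
  have h := sum_Ioo_inv_sq_le (α := ℝ) 0 (n + 1)
  have hIcc : Icc 1 n = Ioo 0 (n + 1) := by ext; simp only [mem_Icc, mem_Ioo]; omega
  simpa [hIcc] using h

lemma sum_Icc_one_reflect {M : Type*} [AddCommMonoid M] (f : ℕ → M) (n : ℕ) :
    ∑ i ∈ Icc 1 n, f (n + 1 - i) = ∑ i ∈ Icc 1 n, f i := by
  refine sum_nbij' (fun i => n + 1 - i) (fun i => n + 1 - i) ?_ ?_ ?_ ?_ ?_ <;>
    intro i hi <;> simp only [mem_Icc] at * <;> omega

lemma inv_sq_mul_inv_sq_le {x y : ℝ} (hx : 0 < x) (hy : 0 < y) :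
    (x ^ 2)⁻¹ * (y ^ 2)⁻¹ ≤ 2 * ((x ^ 2)⁻¹ + (y ^ 2)⁻¹) / (x + y) ^ 2 := by
  rw [← mul_inv, le_div_iff₀ (by positivity)]
  field_simp
  nlinarith [sq_nonneg (x - y), mul_pos hx hy]

lemma sum_inv_sq_mul_inv_sq_le (n : ℕ) :
    ∑ i ∈ Icc 1 n, ((i : ℝ) ^ 2)⁻¹ * (((n + 1 - i : ℕ) : ℝ) ^ 2)⁻¹ ≤ 8 / ((n : ℝ) + 1) ^ 2 := by
  have hpoint : ∀ i ∈ Icc 1 n, ((i : ℝ) ^ 2)⁻¹ * (((n + 1 - i : ℕ) : ℝ) ^ 2)⁻¹ ≤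
      2 * (((i : ℝ) ^ 2)⁻¹ + (((n + 1 - i : ℕ) : ℝ) ^ 2)⁻¹) / ((n : ℝ) + 1) ^ 2 := by
    intro i hi
    rw [mem_Icc] at hi
    have hsum : (i : ℝ) + ((n + 1 - i : ℕ) : ℝ) = n + 1 := by
      rw [Nat.cast_sub (by omega)]; push_cast; ring
    rw [← hsum]
    exact inv_sq_mul_inv_sq_le (by exact_mod_cast hi.1)
      (by exact_mod_cast (by omega : 0 < n + 1 - i))
  calc _ ≤ _ := sum_le_sum hpoint
    _ = 2 * (∑ i ∈ Icc 1 n, ((i : ℝ) ^ 2)⁻¹ + ∑ i ∈ Icc 1 n, (((n + 1 - i : ℕ) : ℝ) ^ 2)⁻¹)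
          / ((n : ℝ) + 1) ^ 2 := by
      rw [← sum_add_distrib, mul_sum, sum_div]
    _ ≤ 2 * (2 + 2) / ((n : ℝ) + 1) ^ 2 := by
      rw [sum_Icc_one_reflect (fun j => ((j : ℝ) ^ 2)⁻¹)]
      gcongr <;> exact sum_Icc_one_inv_sq_le_two n
    _ = 8 / ((n : ℝ) + 1) ^ 2 := by norm_num

lemma le_mul_pow_div_sq_of_le_convolution {a : ℕ → ℝ} {K k c : ℝ} (ha : ∀ n, 0 ≤ a n)
    (hK : 0 ≤ K) (hk : 0 ≤ k) (hc : 0 ≤ c) (hKk : 8 * K * k ≤ 1)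
    (hrec : ∀ n, 1 ≤ n → a (n + 1) ≤ K * ∑ i ∈ Icc 1 n, a i * a (n + 1 - i))
    (h1 : a 1 ≤ k * c) :
    ∀ n, 1 ≤ n → a n ≤ k * c ^ n / (n : ℝ) ^ 2 := by
  intro n hn
  induction n using Nat.strong_induction_on with
  | _ n ih =>
    obtain rfl | ⟨m, hm, rfl⟩ : n = 1 ∨ ∃ m, 1 ≤ m ∧ n = m + 1 :=
      (eq_or_lt_of_le hn).imp Eq.symm fun h => ⟨n - 1, by omega, by omega⟩
    · simpa using h1
    have hterm : ∀ i ∈ Icc 1 m, a i * a (m + 1 - i) ≤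
        k ^ 2 * c ^ (m + 1) * (((i : ℝ) ^ 2)⁻¹ * (((m + 1 - i : ℕ) : ℝ) ^ 2)⁻¹) := by
      intro i hi
      rw [mem_Icc] at hi
      calc a i * a (m + 1 - i)
          ≤ k * c ^ i / (i : ℝ) ^ 2 * (k * c ^ (m + 1 - i) / ((m + 1 - i : ℕ) : ℝ) ^ 2) :=
            mul_le_mul (ih i (by omega) hi.1) (ih _ (by omega) (by omega)) (ha _) (by positivity)
        _ = k ^ 2 * c ^ (i + (m + 1 - i)) * (((i : ℝ) ^ 2)⁻¹ * (((m + 1 - i : ℕ) : ℝ) ^ 2)⁻¹) := by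
            ring
        _ = _ := by rw [Nat.add_sub_cancel' (by omega)]
    calc a (m + 1) ≤ K * ∑ i ∈ Icc 1 m, a i * a (m + 1 - i) := hrec m hm
      _ ≤ K * (k ^ 2 * c ^ (m + 1) *
            ∑ i ∈ Icc 1 m, ((i : ℝ) ^ 2)⁻¹ * (((m + 1 - i : ℕ) : ℝ) ^ 2)⁻¹) := by
        gcongr; rw [mul_sum]; exact sum_le_sum hterm
      _ ≤ K * (k ^ 2 * c ^ (m + 1) * (8 / ((m : ℝ) + 1) ^ 2)) := by
        gcongr; exact sum_inv_sq_mul_inv_sq_le m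
      _ = 8 * K * k * (k * c ^ (m + 1) / ((m + 1 : ℕ) : ℝ) ^ 2) := by push_cast; ring
      _ ≤ k * c ^ (m + 1) / ((m + 1 : ℕ) : ℝ) ^ 2 := mul_le_of_le_one_left (by positivity) hKk

lemma exists_summable_mul_pow_of_abs_le_geometric {a : ℕ → ℝ} {C c : ℝ} (hc : 0 < c)
    (hbound : ∀ n, 1 ≤ n → |a n| ≤ C * c ^ n) :
    ∃ r : ℝ, 0 < r ∧ ∀ t : ℝ, |t| < r → Summable (fun n => a n * t ^ n) := by
  refine ⟨c⁻¹, inv_pos.2 hc, fun t ht => ?_⟩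
  have hct : c * |t| < 1 := by
    simpa [hc.ne'] using mul_lt_mul_of_pos_left ht hc
  refine ((summable_geometric_of_lt_one (by positivity) hct).mul_left C
    ).of_norm_bounded_eventually_nat ?_
  filter_upwards [Filter.eventually_ge_atTop 1] with n hn
  rw [Real.norm_eq_abs, abs_mul, abs_pow, mul_pow, ← mul_assoc]
  exact mul_le_mul_of_nonneg_right (hbound n hn) (by positivity)

/-- If a sequence of nonnegative reals satisfies the recursive bound
`a_{n+1} ≤ K ∑_{i=1}^n a_i a_{n+1-i}` (with `K > 0`), then with `k = 1/(16K)`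
and any `c > 0` with `a_1 ≤ k c` one has `a_n ≤ k cⁿ / n²` for all `n ≥ 1`;
hence the power series `∑ a_n tⁿ` has positive radius of convergence. -/
theorem recursive_majorant_convergence (a : ℕ → ℝ) (ha : ∀ n, 0 ≤ a n)
    (K : ℝ) (hK : 0 < K)
    (hrec : ∀ n, 1 ≤ n →
      a (n + 1) ≤ K * ∑ i ∈ Finset.Icc 1 n, a i * a (n + 1 - i))
    (c : ℝ) (hc : 0 < c) (hc1 : a 1 ≤ (1 / (16 * K)) * c) :
    (∀ n, 1 ≤ n → a n ≤ (1 / (16 * K)) * c ^ n / (n : ℝ) ^ 2) ∧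
    ∃ r : ℝ, 0 < r ∧ ∀ t : ℝ, |t| < r → Summable (fun n => a n * t ^ n) := by
  have hKk : 8 * K * (1 / (16 * K)) ≤ 1 := by field_simp; norm_num
  have hbound := le_mul_pow_div_sq_of_le_convolution ha hK.le (by positivity) hc.le hKk hrec hc1
  refine ⟨hbound, exists_summable_mul_pow_of_abs_le_geometric (C := 1 / (16 * K)) hc
    fun n hn => ?_⟩
  rw [abs_of_nonneg (ha n)]
  refine (hbound n hn).trans (div_le_self (by positivity) ?_)
  exact one_le_pow₀ (by exact_mod_cast hn)
end
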